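/- For every n ≥ 1, the n×n matrix M = (m_{ij}) with entries m_{ij} = (i+j−2)! (indices i,j ∈ {1,…,n}) has a non-zero determinant. -/

import Mathlib

/-!
Writing `(i + j)! = i! j! C(i+j, i)` and expanding `C(i+j, i) = ∑ₖ C(i,k) C(j,k)` by Vandermonde's
identity exhibits the matrix as `A Aᵀ` with `A i k = i! C(i,k)`. This `A` is lower triangular with
diagonal `i!`, so the determinant is `(∏ i!)²`.
-/

open Finset Matrix Nat

theorem Nat.sum_range_choose_mul_choose (m n : ℕ) :
    ∑ k ∈ range (m + 1), m.choose k * n.choose k = (m + n).choose m := by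
  rw [add_choose_eq, ← Nat.sum_antidiagonal_swap, Nat.sum_antidiagonal_eq_sum_range_succ_mk]
  refine sum_congr rfl fun k hk => ?_
  rw [Prod.swap_prod_mk, choose_symm (mem_range_succ_iff.mp hk)]

theorem Nat.sum_range_choose_mul_choose_of_lt {m N : ℕ} (n : ℕ) (hm : m < N) :
    ∑ k ∈ range N, m.choose k * n.choose k = (m + n).choose m := by
  rw [← sum_range_choose_mul_choose, ← sum_range_add_sum_Ico _ hm, add_eq_left]
  exact sum_eq_zero fun k hk => by rw [choose_eq_zero_of_lt (mem_Ico.mp hk).1, zero_mul]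

theorem Nat.factorial_add_eq_sum_range {i N : ℕ} (j : ℕ) (hi : i < N) :
    (i + j)! = ∑ k ∈ range N, i ! * i.choose k * (j ! * j.choose k) := by
  calc (i + j)! = i ! * j ! * (i + j).choose i := by
        rw [choose_symm_add, ← add_choose_mul_factorial_mul_factorial]; ring
    _ = _ := by
        rw [← sum_range_choose_mul_choose_of_lt j hi, mul_sum]
        exact sum_congr rfl fun k _ => by ring

def factorialChooseMatrix (R : Type*) [NatCast R] (n : ℕ) : Matrix (Fin n) (Fin n) R :=
  of fun i k => ((i.1 ! * i.1.choose k.1 : ℕ) : R)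

section

variable (R : Type*) (n : ℕ)

theorem factorialChooseMatrix_isLowerTriangular [AddMonoidWithOne R] :
    (factorialChooseMatrix R n).IsLowerTriangular := by
  intro i k hik
  simp [factorialChooseMatrix, choose_eq_zero_of_lt (show i.1 < k.1 from hik)]

theorem det_factorialChooseMatrix [CommRing R] :
    (factorialChooseMatrix R n).det = ∏ i : Fin n, (i.1 ! : R) := by
  rw [det_of_isLowerTriangular _ (factorialChooseMatrix_isLowerTriangular R n)]
  simp [factorialChooseMatrix]

theorem of_factorial_add_eq_mul_transpose [CommSemiring R] :
    (of fun i j : Fin n => ((i.1 + j.1)! : R)) =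
      factorialChooseMatrix R n * (factorialChooseMatrix R n)ᵀ := by
  ext i j
  rw [of_apply, mul_apply, factorial_add_eq_sum_range j.1 i.2, ← Fin.sum_univ_eq_sum_range]
  simp only [factorialChooseMatrix, of_apply, transpose_apply, Nat.cast_sum, Nat.cast_mul]

theorem det_of_factorial_add [CommRing R] :
    (of fun i j : Fin n => ((i.1 + j.1)! : R)).det = (∏ i : Fin n, (i.1 ! : R)) ^ 2 := by
  rw [of_factorial_add_eq_mul_transpose, det_mul, det_transpose, det_factorialChooseMatrix, sq]

end

theorem factorial_pascal_matrix_det_ne_zero (n : ℕ) :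
    Matrix.det (Matrix.of fun i j : Fin n =>
      (Nat.factorial (i.1 + j.1) : ℚ)) ≠ 0 := by
  rw [det_of_factorial_add]
  positivity
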